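/- arXiv:1412.1520 — 6 statements merged into one kernel-verified Lean document; each statement's English description precedes it below -/
import Mathlib

section
/- Let S be a leaf SCC of a finite directed graph G, let i be any vertex of S, and let G' be the graph obtained from G by deleting all outgoing arcs of i. Then in G', every vertex of S has a directed path to i (so every vertex of S is grounded in G'), and G' has exactly one fewer leaf SCC than G. -/
/-!
Removing the outgoing arcs of `i` leaves every path that ends at `i` intact once it is cut at
its first visit to `i`, so `S` still drains into `i`, now a sink. A leaf SCC of the pruned graph
is nontrivial, hence cannot contain the sink `i`; conversely a leaf SCC avoiding `i` is closed
under arcs, so no path out of it uses a deleted arc. Thus the leaf SCCs of the pruned graph are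
exactly the leaf SCCs of `G` avoiding `i`, i.e. all of them except `S`.
-/

/-- A leaf vertex of a directed graph: a vertex with no outgoing arcs. -/
def IsLeafVertex {V : Type*} (A : V → V → Prop) (i : V) : Prop := ∀ j, ¬ A i j

/-- A strongly connected component: a nonempty set of vertices, any two of which are
mutually reachable, and which is maximal with this property. -/
def IsSCC {V : Type*} (A : V → V → Prop) (S : Set V) : Prop :=
  S.Nonempty ∧ (∀ i ∈ S, ∀ j ∈ S, Relation.ReflTransGen A i j) ∧
    ∀ k, (∀ j ∈ S, Relation.ReflTransGen A k j ∧ Relation.ReflTransGen A j k) → k ∈ S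

/-- A leaf SCC: a non-trivial SCC (at least two vertices) with no arc leaving it. -/
def IsLeafSCC {V : Type*} (A : V → V → Prop) (S : Set V) : Prop :=
  IsSCC A S ∧ (∃ i ∈ S, ∃ j ∈ S, i ≠ j) ∧ ∀ i ∈ S, ∀ j, A i j → j ∈ S

open Relation

section

variable {V : Type*}

def deleteOutArcs (A : V → V → Prop) (i : V) : V → V → Prop := fun j k => A j k ∧ j ≠ i

variable {A : V → V → Prop} {i : V} {S T : Set V}

lemma deleteOutArcs_le : deleteOutArcs A i ≤ A := fun _ _ h => h.1

lemma isLeafVertex_deleteOutArcs : IsLeafVertex (deleteOutArcs A i) i := fun _ h => h.2 rfl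

lemma reflTransGen_deleteOutArcs_of_reflTransGen {v : V} (h : ReflTransGen A v i) :
    ReflTransGen (deleteOutArcs A i) v i := by
  induction h using ReflTransGen.head_induction_on with
  | refl => exact .refl
  | @head x y hxy _ ih =>
    rcases eq_or_ne x i with rfl | hx
    · exact .refl
    · exact .head ⟨hxy, hx⟩ ih

lemma mem_of_reflTransGen_of_forall_mem (hT : ∀ j ∈ T, ∀ k, A j k → k ∈ T)
    {j k : V} (hj : j ∈ T) (h : ReflTransGen A j k) : k ∈ T := by
  induction h with
  | refl => exact hj
  | tail _ hbc ih => exact hT _ ih _ hbc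

lemma reflTransGen_deleteOutArcs_of_forall_mem (hT : ∀ j ∈ T, ∀ k, A j k → k ∈ T)
    (hiT : i ∉ T) {j k : V} (hj : j ∈ T) (h : ReflTransGen A j k) :
    ReflTransGen (deleteOutArcs A i) j k := by
  induction h using ReflTransGen.head_induction_on with
  | refl => exact .refl
  | @head x y hxy _ ih => exact .head ⟨hxy, fun h => hiT (h ▸ hj)⟩ (ih (hT x hj y hxy))

lemma IsSCC.subset_of_mem (hS : IsSCC A S) (hT : IsSCC A T)
    {x : V} (hxS : x ∈ S) (hxT : x ∈ T) : S ⊆ T := fun k hk =>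
  hT.2.2 k fun j hj =>
    ⟨(hS.2.1 k hk x hxS).trans (hT.2.1 x hxT j hj),
      (hT.2.1 j hj x hxT).trans (hS.2.1 x hxS k hk)⟩

lemma IsSCC.eq_of_mem (hS : IsSCC A S) (hT : IsSCC A T)
    {x : V} (hxS : x ∈ S) (hxT : x ∈ T) : S = T :=
  (hS.subset_of_mem hT hxS hxT).antisymm (hT.subset_of_mem hS hxT hxS)

lemma IsLeafSCC.notMem_of_isLeafVertex (hT : IsLeafSCC A T)
    {l : V} (hl : IsLeafVertex A l) : l ∉ T := by
  obtain ⟨⟨-, hconn, -⟩, ⟨a, ha, b, hb, hab⟩, -⟩ := hT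
  intro hlT
  have hal : a = l := (reflTransGen_iff_eq hl).1 (hconn l hlT a ha)
  have hbl : b = l := (reflTransGen_iff_eq hl).1 (hconn l hlT b hb)
  exact hab (hal.trans hbl.symm)

lemma isLeafSCC_deleteOutArcs_of_notMem (hT : IsLeafSCC A T) (hiT : i ∉ T) :
    IsLeafSCC (deleteOutArcs A i) T := by
  obtain ⟨⟨hne, hconn, hmax⟩, hnt, hclosed⟩ := hT
  refine ⟨⟨hne, fun p hp q hq => ?_, fun k hk => hmax k fun j hj => ?_⟩, hnt,
    fun j hj k hjk => hclosed j hj k hjk.1⟩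
  · exact reflTransGen_deleteOutArcs_of_forall_mem hclosed hiT hp (hconn p hp q hq)
  · exact ⟨ReflTransGen.mono deleteOutArcs_le _ _ (hk j hj).1,
      ReflTransGen.mono deleteOutArcs_le _ _ (hk j hj).2⟩

lemma isLeafSCC_deleteOutArcs_iff :
    IsLeafSCC (deleteOutArcs A i) T ↔ IsLeafSCC A T ∧ i ∉ T := by
  refine ⟨fun hT => ?_, fun ⟨hT, hiT⟩ => isLeafSCC_deleteOutArcs_of_notMem hT hiT⟩
  have hiT : i ∉ T := hT.notMem_of_isLeafVertex isLeafVertex_deleteOutArcs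
  obtain ⟨⟨hne, hconn, -⟩, hnt, hclosed'⟩ := hT
  have hclosed : ∀ j ∈ T, ∀ k, A j k → k ∈ T :=
    fun j hj k hjk => hclosed' j hj k ⟨hjk, fun h => hiT (h ▸ hj)⟩
  refine ⟨⟨⟨hne, fun p hp q hq => ReflTransGen.mono deleteOutArcs_le _ _ (hconn p hp q hq),
    fun k hk => ?_⟩, hnt, hclosed⟩, hiT⟩
  obtain ⟨j, hj⟩ := hne
  exact mem_of_reflTransGen_of_forall_mem hclosed hj (hk j hj).2

lemma setOf_isLeafSCC_deleteOutArcs (hS : IsLeafSCC A S) (hi : i ∈ S) :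
    {T : Set V | IsLeafSCC (deleteOutArcs A i) T} = {T : Set V | IsLeafSCC A T} \ {S} := by
  ext T
  simp only [Set.mem_ofPred_eq, Set.mem_sdiff, Set.mem_singleton_iff, isLeafSCC_deleteOutArcs_iff]
  refine and_congr_right fun hT => ⟨fun hiT hTS => hiT (hTS ▸ hi), fun hTS hiT => hTS ?_⟩
  exact hT.1.eq_of_mem hS.1 hiT hi

end

/-- Pruning a leaf SCC: let `S` be a leaf SCC of `G`, `i ∈ S`, and let `G'` be obtained
from `G` by deleting all outgoing arcs of `i`. Then in `G'` every vertex of `S` has a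
directed path to `i` (which is a leaf vertex of `G'`, so every vertex of `S` is grounded
in `G'`), and `G'` has exactly one fewer leaf SCC than `G`. -/
theorem prune_leaf_scc {V : Type*} [Fintype V] (A : V → V → Prop) (S : Set V)
    (hS : IsLeafSCC A S) (i : V) (hi : i ∈ S) :
    (∀ v ∈ S, Relation.ReflTransGen (fun j k => A j k ∧ j ≠ i) v i) ∧
    (∀ v ∈ S, ∃ l : V, IsLeafVertex (fun j k => A j k ∧ j ≠ i) l ∧
        Relation.ReflTransGen (fun j k => A j k ∧ j ≠ i) v l) ∧
    {T : Set V | IsLeafSCC (fun j k => A j k ∧ j ≠ i) T}.ncard + 1 =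
      {T : Set V | IsLeafSCC A T}.ncard := by
  have hpath : ∀ v ∈ S, ReflTransGen (deleteOutArcs A i) v i :=
    fun v hv => reflTransGen_deleteOutArcs_of_reflTransGen (hS.1.2.1 v hv i hi)
  refine ⟨hpath, fun v hv => ⟨i, isLeafVertex_deleteOutArcs, hpath v hv⟩, ?_⟩
  change {T : Set V | IsLeafSCC (deleteOutArcs A i) T}.ncard + 1 = _
  rw [setOf_isLeafSCC_deleteOutArcs hS hi]
  exact Set.ncard_sdiff_singleton_add_one hS
end

section
/- For any index code of a single-uniprior index-coding instance represented by information-flow graph G, and any vertices i and j such that there is a directed path from j to i in G, receiver i can decode the message x_j; formally, H(X_j | C, X_i) = 0, where C is the codeword. -/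
/-- A valid index code for a single-uniprior index-coding instance on the
information-flow graph `A` on `Fin n`, where message `x i` consists of `q i` uniform
bits and receiver `i` knows `x i` a priori: whenever there is an arc `(j → i)`,
receiver `i` can decode `x j` from the codeword and its own message, i.e. `x j` is
determined by `(E x, x i)`. -/
def IsIndexCode {n : ℕ} (A : Fin n → Fin n → Prop) (q : Fin n → ℕ) {ℓ : ℕ}
    (E : (∀ i, Fin (q i) → Bool) → (Fin ℓ → Bool)) : Prop :=
  ∀ i j, A j i → ∀ x y, E x = E y → x i = y i → x j = y j

/-- The optimal index codelength `ℓ*(G)`: the minimum number of broadcast bits of a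
valid index code. -/
noncomputable def optLen {n : ℕ} (A : Fin n → Fin n → Prop) (q : Fin n → ℕ) : ℕ :=
  sInf {ℓ : ℕ | ∃ E : (∀ i, Fin (q i) → Bool) → (Fin ℓ → Bool), IsIndexCode A q E}

/-- For any index code and any vertices `i, j` with a directed path from `j` to `i` in
the information-flow graph, receiver `i` can decode `x j`: formally `H(X_j | C, X_i) = 0`,
i.e. `x j` is a function of the codeword and `x i`. -/
theorem receiver_decodes_predecessors {n : ℕ} (A : Fin n → Fin n → Prop) (q : Fin n → ℕ)
    {ℓ : ℕ} (E : (∀ i, Fin (q i) → Bool) → (Fin ℓ → Bool)) (hE : IsIndexCode A q E)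
    (i j : Fin n) (hpath : Relation.ReflTransGen A j i) :
    ∀ x y, E x = E y → x i = y i → x j = y j := by
  induction hpath using Relation.ReflTransGen.head_induction_on with
  | refl => exact fun x y _ h => h
  | head hab _ ih => exact fun x y hEq hi => hE _ _ hab x y hEq (ih x y hEq hi)
end

section
/- For a single-uniprior index-coding instance with message lengths q_i, the optimal index codelength satisfies ℓ*(G) ≥ Σ_{i predecessor of some leaf vertex of G} q_i. -/
/- Fix a leaf `l` and two message tuples with the same codeword that agree outside the set `S` of
predecessors of leaves. A leaf is not itself in `S`, so the tuples agree at `l`, and since receiver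
`j` decodes `x i` along every arc `i → j`, agreement propagates backwards along paths to every
predecessor of `l`. Hence the codeword determines the `∑_{i ∈ S} q i` message bits of `S`, so it
has at least that many bits. -/

section Counting

variable {ι : Type*} {q : ι → ℕ} {ℓ : ℕ}

theorem sum_le_of_determines_on [DecidableEq ι] (E : (∀ i, Fin (q i) → Bool) → (Fin ℓ → Bool))
    (S : Finset ι)
    (hE : ∀ x y, E x = E y → (∀ i ∉ S, x i = y i) → ∀ i ∈ S, x i = y i) :
    ∑ i ∈ S, q i ≤ ℓ := by
  let extend (z : ∀ i : S, Fin (q i) → Bool) : ∀ i, Fin (q i) → Bool :=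
    fun i => if h : i ∈ S then z ⟨i, h⟩ else fun _ => false
  have hinj : Function.Injective (E ∘ extend) := by
    intro z w hzw
    have hon := hE (extend z) (extend w) hzw (fun i hi => by simp [extend, hi])
    funext i
    simpa [extend] using hon i i.2
  have hcard := Fintype.card_le_of_injective _ hinj
  rw [Fintype.card_pi, Fintype.card_fun] at hcard
  simp only [Fintype.card_fun, Fintype.card_fin, Fintype.card_bool, Finset.prod_pow_eq_pow_sum,
    Finset.sum_coe_sort] at hcard
  exact (Nat.pow_le_pow_iff_right one_lt_two).mp hcard

theorem exists_injective_encoding [Fintype ι] [DecidableEq ι] (q : ι → ℕ) :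
    ∃ E : (∀ i, Fin (q i) → Bool) → (Fin (∑ i, q i) → Bool), Function.Injective E := by
  have hcard : Fintype.card (∀ i, Fin (q i) → Bool) ≤ Fintype.card (Fin (∑ i, q i) → Bool) := by
    simp [Fintype.card_pi, Finset.prod_pow_eq_pow_sum]
  obtain ⟨E⟩ := Function.Embedding.nonempty_of_card_le hcard
  exact ⟨E, E.injective⟩

end Counting

section IndexCode

variable {n : ℕ} {A : Fin n → Fin n → Prop} {q : Fin n → ℕ}

theorem isIndexCode_of_injective {ℓ : ℕ} {E : (∀ i, Fin (q i) → Bool) → (Fin ℓ → Bool)}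
    (hE : Function.Injective E) : IsIndexCode A q E :=
  fun _ _ _ _ _ hxy _ => by rw [hE hxy]

theorem exists_isIndexCode_optLen (A : Fin n → Fin n → Prop) (q : Fin n → ℕ) :
    ∃ E : (∀ i, Fin (q i) → Bool) → (Fin (optLen A q) → Bool), IsIndexCode A q E := by
  obtain ⟨E, hE⟩ := exists_injective_encoding q
  exact Nat.sInf_mem (s := {ℓ | ∃ E : (∀ i, Fin (q i) → Bool) → (Fin ℓ → Bool),
    IsIndexCode A q E}) ⟨_, E, isIndexCode_of_injective hE⟩

theorem IsIndexCode.eq_of_reflTransGen {ℓ : ℕ} {E : (∀ i, Fin (q i) → Bool) → (Fin ℓ → Bool)}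
    (hE : IsIndexCode A q E) {x y : ∀ i, Fin (q i) → Bool} (hxy : E x = E y) {i j : Fin n}
    (hij : Relation.ReflTransGen A i j) (hj : x j = y j) : x i = y i := by
  induction hij using Relation.ReflTransGen.head_induction_on with
  | refl => exact hj
  | head hik _ ih => exact hE _ _ hik x y hxy ih

end IndexCode

open Classical in
/-- Lower bound: the optimal index codelength is at least the total length of the
messages of all predecessors of leaf vertices. -/
theorem optLen_ge_sum_predecessors_of_leaves {n : ℕ} (A : Fin n → Fin n → Prop)
    (q : Fin n → ℕ) :
    ∑ i ∈ Finset.univ.filter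
        (fun i => ∃ l : Fin n, (∀ k, ¬ A l k) ∧ Relation.TransGen A i l), q i ≤
      optLen A q := by
  obtain ⟨E, hE⟩ := exists_isIndexCode_optLen A q
  refine sum_le_of_determines_on E _ fun x y hxy hoff i hi => ?_
  obtain ⟨l, hleaf, hil⟩ := (Finset.mem_filter.mp hi).2
  have hl_not_pred : l ∉ Finset.univ.filter
      (fun i => ∃ l : Fin n, (∀ k, ¬ A l k) ∧ Relation.TransGen A i l) := by
    rintro hl
    obtain ⟨_, _, hpath⟩ := (Finset.mem_filter.mp hl).2
    obtain ⟨k, hlk, -⟩ := Relation.TransGen.head'_iff.mp hpath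
    exact hleaf k hlk
  exact hE.eq_of_reflTransGen hxy hil.to_reflTransGen (hoff l hl_not_pred)
end

section
/- In a multi-sender index-coding instance, if there is no path in the message graph U between vertices a and b, then any index code C can be split as C = (C_a, C_b) where C_a depends only on the messages of vertices connected to a in U and C_b only on the remaining messages; consequently X_a and (C_b, X_b) are independent given C_a (a Markov chain X_a − C_a − (C_b, X_b)). -/
/-- The edge relation of the message graph `U`: vertices `i` and `j` are joined iff some
sender knows both messages `x i` and `x j`. -/
def MsgEdge {n S : ℕ} (M : Fin S → Set (Fin n)) (i j : Fin n) : Prop :=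
  ∃ s, i ∈ M s ∧ j ∈ M s

/-- A valid multi-sender index code for a single-uniprior instance with binary messages:
information-flow graph `A` on `Fin n`, senders `s ∈ Fin S` each knowing the message
subset `M s`. Each codeword bit is a function of the messages of a single sender, and
whenever there is an arc `(j → i)`, receiver `i` (knowing `x i`) can decode `x j` from
the codeword. -/
def IsMSCode {n S ℓ : ℕ} (A : Fin n → Fin n → Prop) (M : Fin S → Set (Fin n))
    (E : (Fin n → Bool) → (Fin ℓ → Bool)) : Prop :=
  (∀ b : Fin ℓ, ∃ s : Fin S, ∀ x y : Fin n → Bool,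
      (∀ i ∈ M s, x i = y i) → E x b = E y b) ∧
  (∀ i j : Fin n, A j i → ∀ x y : Fin n → Bool, E x = E y → x i = y i → x j = y j)

/-- The optimal multi-sender index codelength `ℓ̃*(G,U)`: the minimum total number of
transmitted bits over all valid multi-sender index codes. -/
noncomputable def msOptLen {n S : ℕ} (A : Fin n → Fin n → Prop)
    (M : Fin S → Set (Fin n)) : ℕ :=
  sInf {ℓ : ℕ | ∃ E : (Fin n → Bool) → (Fin ℓ → Bool), IsMSCode A M E}

/-- If there is no path in the message graph `U` between `a` and `b`, then any
multi-sender codeword splits into bits `C_a` depending only on the messages of the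
`U`-component `V_a` of `a`, and bits `C_b` depending only on the remaining messages;
consequently, for uniform independent messages, `X_a − C_a − (C_b, X_b)` is a Markov
chain: given `C_a`, the pair `(X_a)` and `(C_b, X_b)` are conditionally independent
(stated here in counting form over the uniform message distribution). -/
theorem code_splits_along_message_components {n S ℓ : ℕ} (M : Fin S → Set (Fin n))
    (A : Fin n → Fin n → Prop) (E : (Fin n → Bool) → (Fin ℓ → Bool))
    (hE : IsMSCode A M E) (a b : Fin n)
    (hdisc : ¬ Relation.ReflTransGen (MsgEdge M) a b) :
    ∃ Pa : Fin ℓ → Prop,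
      (∀ c : Fin ℓ, Pa c → ∀ x y : Fin n → Bool,
        (∀ i, Relation.ReflTransGen (MsgEdge M) a i → x i = y i) → E x c = E y c) ∧
      (∀ c : Fin ℓ, ¬ Pa c → ∀ x y : Fin n → Bool,
        (∀ i, ¬ Relation.ReflTransGen (MsgEdge M) a i → x i = y i) → E x c = E y c) ∧
      (∀ x : Fin n → Bool,
        {y : Fin n → Bool | ∀ c, Pa c → E y c = E x c}.ncard *
          {y : Fin n → Bool | (∀ c, Pa c → E y c = E x c) ∧ y a = x a ∧
            (∀ c, ¬ Pa c → E y c = E x c) ∧ y b = x b}.ncard =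
        {y : Fin n → Bool | (∀ c, Pa c → E y c = E x c) ∧ y a = x a}.ncard *
          {y : Fin n → Bool | (∀ c, Pa c → E y c = E x c) ∧
            (∀ c, ¬ Pa c → E y c = E x c) ∧ y b = x b}.ncard) := by
  classical
  set R : Fin n → Prop := fun i => Relation.ReflTransGen (MsgEdge M) a i with hRdef
  set Pa : Fin ℓ → Prop := fun c =>
    ∀ u v : Fin n → Bool, (∀ i, R i → u i = v i) → E u c = E v c with hPadef
  have hPa : ∀ c : Fin ℓ, Pa c → ∀ u v : Fin n → Bool,
      (∀ i, R i → u i = v i) → E u c = E v c := fun c hc => hc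
  have hPb : ∀ c : Fin ℓ, ¬ Pa c → ∀ u v : Fin n → Bool,
      (∀ i, ¬ R i → u i = v i) → E u c = E v c := by
    intro c hc u v h
    obtain ⟨s, hs⟩ := hE.1 c
    have hsub : ∀ i ∈ M s, ¬ R i := by
      intro i hi hri
      apply hc
      intro u v huv
      apply hs
      intro j hj
      exact huv j (hri.trans (Relation.ReflTransGen.single ⟨s, hi, hj⟩))
    exact hs u v fun i hi => h i (hsub i hi)
  refine ⟨Pa, hPa, hPb, ?_⟩
  intro x
  set F : (Fin n → Bool) → Prop := fun y => ∀ c, Pa c → E y c = E x c with hFdef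
  set Ap : (Fin n → Bool) → Prop := fun y => y a = x a with hApdef
  set G : (Fin n → Bool) → Prop :=
    fun y => (∀ c, ¬ Pa c → E y c = E x c) ∧ y b = x b with hGdef
  have hFdep : ∀ u v : Fin n → Bool, (∀ i, R i → u i = v i) → F u → F v := by
    intro u v h hFu c hc
    rw [← hPa c hc u v h]; exact hFu c hc
  have hGdep : ∀ u v : Fin n → Bool, (∀ i, ¬ R i → u i = v i) → G u → G v := by
    intro u v h hGu
    refine ⟨fun c hc => ?_, ?_⟩
    · rw [← hPb c hc u v h]; exact hGu.1 c hc
    · rw [← h b hdisc]; exact hGu.2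
  set mix : (Fin n → Bool) → (Fin n → Bool) → (Fin n → Bool) :=
    fun u v i => if R i then u i else v i with hmixdef
  have hmixR : ∀ u v : Fin n → Bool, ∀ i, R i → mix u v i = u i := by
    intro u v i hi; simp [hmixdef, hi]
  have hmixN : ∀ u v : Fin n → Bool, ∀ i, ¬ R i → mix u v i = v i := by
    intro u v i hi; simp [hmixdef, hi]
  -- the swap bijection
  let e : ({y : Fin n → Bool // F y} × {y : Fin n → Bool // F y ∧ Ap y ∧ G y}) ≃
      ({y : Fin n → Bool // F y ∧ Ap y} × {y : Fin n → Bool // F y ∧ G y}) :=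
    { toFun := fun p =>
        (⟨mix p.2.1 p.1.1, hFdep p.2.1 _ (fun i hi => (hmixR _ _ i hi).symm) p.2.2.1,
          by show mix p.2.1 p.1.1 a = x a
             rw [hmixR _ _ a Relation.ReflTransGen.refl]; exact p.2.2.2.1⟩,
         ⟨mix p.1.1 p.2.1, hFdep p.1.1 _ (fun i hi => (hmixR _ _ i hi).symm) p.1.2,
          hGdep p.2.1 _ (fun i hi => (hmixN _ _ i hi).symm) p.2.2.2.2⟩)
      invFun := fun p =>
        (⟨mix p.2.1 p.1.1, hFdep p.2.1 _ (fun i hi => (hmixR _ _ i hi).symm) p.2.2.1⟩,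
         ⟨mix p.1.1 p.2.1, hFdep p.1.1 _ (fun i hi => (hmixR _ _ i hi).symm) p.1.2.1,
          by show mix p.1.1 p.2.1 a = x a
             rw [hmixR _ _ a Relation.ReflTransGen.refl]; exact p.1.2.2,
          hGdep p.2.1 _ (fun i hi => (hmixN _ _ i hi).symm) p.2.2.2⟩)
      left_inv := by
        rintro ⟨⟨u, hu⟩, ⟨v, hv⟩⟩
        ext i <;> by_cases hi : R i <;>
          simp [hmixdef, hi]
      right_inv := by
        rintro ⟨⟨u, hu⟩, ⟨v, hv⟩⟩
        ext i <;> by_cases hi : R i <;>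
          simp [hmixdef, hi] }
  have key : Nat.card ({y : Fin n → Bool // F y} × {y : Fin n → Bool // F y ∧ Ap y ∧ G y})
      = Nat.card ({y : Fin n → Bool // F y ∧ Ap y} × {y : Fin n → Bool // F y ∧ G y}) :=
    Nat.card_congr e
  rw [Nat.card_prod, Nat.card_prod] at key
  have e1 : {y : Fin n → Bool | ∀ c, Pa c → E y c = E x c}.ncard
      = Nat.card {y : Fin n → Bool // F y} := by
    rw [← Nat.card_coe_set_eq]; rfl
  have e2 : {y : Fin n → Bool | (∀ c, Pa c → E y c = E x c) ∧ y a = x a ∧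
      (∀ c, ¬ Pa c → E y c = E x c) ∧ y b = x b}.ncard
      = Nat.card {y : Fin n → Bool // F y ∧ Ap y ∧ G y} := by
    rw [← Nat.card_coe_set_eq]
    apply Nat.card_congr
    exact Equiv.subtypeEquivRight (by
      intro y; constructor
      · rintro ⟨h1, h2, h3, h4⟩; exact ⟨h1, h2, h3, h4⟩
      · rintro ⟨h1, h2, h3, h4⟩; exact ⟨h1, h2, h3, h4⟩)
  have e3 : {y : Fin n → Bool | (∀ c, Pa c → E y c = E x c) ∧ y a = x a}.ncard
      = Nat.card {y : Fin n → Bool // F y ∧ Ap y} := by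
    rw [← Nat.card_coe_set_eq]; rfl
  have e4 : {y : Fin n → Bool | (∀ c, Pa c → E y c = E x c) ∧
      (∀ c, ¬ Pa c → E y c = E x c) ∧ y b = x b}.ncard
      = Nat.card {y : Fin n → Bool // F y ∧ G y} := by
    rw [← Nat.card_coe_set_eq]
    apply Nat.card_congr
    exact Equiv.subtypeEquivRight (by
      intro y; constructor
      · rintro ⟨h1, h2, h3⟩; exact ⟨h1, h2, h3⟩
      · rintro ⟨h1, h2, h3⟩; exact ⟨h1, h2, h3⟩)
  rw [e1, e2, e3, e4, key]
end

section
/- In a multi-sender single-uniprior index-coding instance with binary messages, if a leaf SCC of the information-flow graph G is message-disconnected (it contains two vertices with no path between them in the message graph U), then from any valid index code alone—without any side information—one can decode all messages of that leaf SCC; formally H(X_S | C) = 0 for the message vector X_S of the leaf SCC. -/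
/-- If a leaf SCC `T` of the information-flow graph is message-disconnected (it contains
two vertices with no path between them in the message graph `U`), then from any valid
multi-sender index code the messages of `T` are decodable from the codeword alone:
`H(X_T | C) = 0`. -/
theorem message_disconnected_leaf_scc_decodable {n S ℓ : ℕ}
    (A : Fin n → Fin n → Prop) (M : Fin S → Set (Fin n))
    (E : (Fin n → Bool) → (Fin ℓ → Bool)) (hE : IsMSCode A M E)
    (T : Set (Fin n)) (hT : IsLeafSCC A T)
    (u w : Fin n) (hu : u ∈ T) (hw : w ∈ T)
    (hdisc : ¬ Relation.ReflTransGen (MsgEdge M) u w) :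
    ∀ x y : Fin n → Bool, E x = E y → ∀ i ∈ T, x i = y i := by
  classical
  -- decoding propagates backwards along paths
  have decode : ∀ x z : Fin n → Bool, E x = E z → ∀ j i : Fin n,
      Relation.ReflTransGen A j i → x i = z i → x j = z j := by
    intro x z hxz j i hpath
    induction hpath with
    | refl => exact fun h => h
    | tail hab hbc ih => intro h; exact ih (hE.2 _ _ hbc x z hxz h)
  intro x y hxy
  set K : Fin n → Prop := fun i => Relation.ReflTransGen (MsgEdge M) u i with hK
  set z : Fin n → Bool := fun i => if K i then x i else y i with hz
  have hEz : E z = E x := by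
    funext b
    obtain ⟨s, hs⟩ := hE.1 b
    by_cases hc : ∃ i ∈ M s, K i
    · obtain ⟨i0, hi0, hKi0⟩ := hc
      have : ∀ i ∈ M s, z i = x i := by
        intro i hi
        have : K i := hKi0.tail ⟨s, hi0, hi⟩
        simp [hz, this]
      exact hs z x this
    · have : ∀ i ∈ M s, z i = y i := by
        intro i hi
        have : ¬ K i := fun h => hc ⟨i, hi, h⟩
        simp [hz, this]
      exact (hs z y this).trans (congrFun hxy b).symm
  have hzu : z u = x u := by simp [hz, hK, Relation.ReflTransGen.refl]
  have hzw : z w = y w := by simp [hz, hK, hdisc]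
  intro i hi
  have hiu : Relation.ReflTransGen A i u := hT.1.2.1 i hi u hu
  have hiw : Relation.ReflTransGen A i w := hT.1.2.1 i hi w hw
  have h1 : z i = x i := decode z x hEz i u hiu hzu
  have h2 : z i = y i := decode z y (hEz.trans hxy) i w hiw hzw
  exact h1.symm.trans h2
end

section
/- Appending a message-disconnected leaf SCC—adding a dummy vertex n+1 with a constant message known to all, and an arc from one vertex of the SCC to n+1—does not change the optimal multi-sender index codelength: ℓ̃*(G', U') = ℓ̃*(G, U). -/
/-- Appending a message-disconnected leaf SCC `T`—adding a dummy vertex with a constant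
message known to all receivers, and an arc from a vertex `v ∈ T` to the dummy vertex
(so that the dummy receiver, having no useful side information, must additionally
decode `x v`, hence all messages of `T`)—does not change the optimal multi-sender index
codelength: `ℓ̃*(G',U') = ℓ̃*(G,U)`. -/
theorem append_message_disconnected_preserves_optLen {n S : ℕ}
    (A : Fin n → Fin n → Prop) (M : Fin S → Set (Fin n))
    (T : Set (Fin n)) (hT : IsLeafSCC A T)
    (u w : Fin n) (hu : u ∈ T) (hw : w ∈ T)
    (hdisc : ¬ Relation.ReflTransGen (MsgEdge M) u w)
    (v : Fin n) (hv : v ∈ T) :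
    sInf {ℓ : ℕ | ∃ E : (Fin n → Bool) → (Fin ℓ → Bool),
        IsMSCode A M E ∧ ∀ x y : Fin n → Bool, E x = E y → x v = y v} =
      msOptLen A M := by
  unfold msOptLen
  congr 1
  ext ℓ
  simp only [Set.mem_setOf_eq]
  constructor
  · rintro ⟨E, hE, -⟩; exact ⟨E, hE⟩
  · rintro ⟨E, hE⟩
    refine ⟨E, hE, fun x y hxy => ?_⟩
    obtain ⟨hsend, hdec⟩ := hE
    -- decoding along paths
    have decode : ∀ x y : Fin n → Bool, E x = E y → ∀ i j : Fin n,
        Relation.ReflTransGen A j i → x i = y i → x j = y j := by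
      intro x y hxy i j hpath hi
      induction hpath using Relation.ReflTransGen.head_induction_on with
      | refl => exact hi
      | head hajk _ ih => exact hdec _ _ hajk x y hxy ih
    -- hybrid message vector
    set C : Set (Fin n) := {i | Relation.ReflTransGen (MsgEdge M) u i} with hC
    classical
    set z : Fin n → Bool := fun i => if i ∈ C then x i else y i with hz
    have hEzx : ∀ b, E z b = E x b ∨ E z b = E y b := by
      intro b
      obtain ⟨s, hs⟩ := hsend b
      by_cases hcase : ∀ i ∈ M s, i ∈ C
      · left
        exact hs z x (fun i hi => by simp [hz, hcase i hi])
      · right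
        push_neg at hcase
        obtain ⟨i0, hi0, hi0C⟩ := hcase
        refine hs z y (fun i hi => ?_)
        have : i ∉ C := by
          intro hiC
          exact hi0C (hiC.trans (Relation.ReflTransGen.single ⟨s, hi, hi0⟩))
        simp [hz, this]
    have hEz : E z = E x := by
      funext b
      rcases hEzx b with h | h
      · exact h
      · rw [h, hxy]
    have hEzy : E z = E y := by rw [hEz, hxy]
    have hzu : z u = x u := by simp [hz, hC, Relation.ReflTransGen.refl]
    have hzw : z w = y w := by simp [hz, hC, hdisc]
    obtain ⟨⟨hTne, hTsc, hTmax⟩, -, -⟩ := hT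
    -- from z u = x u : z v = x v  (path v →* u inside T)
    have h1 : z v = x v := decode z x hEz u v (hTsc v hv u hu) hzu
    have h2 : z v = y v := decode z y hEzy w v (hTsc v hv w hw) hzw
    rw [← h1, h2]
end
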